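/- Assume μ is uniform and let ξ ∈ ℂ. Then almost surely, for every 0 < r < 1, sup_{|z| ≤ r} |(1/n) D_ξPₙ(ω)(z)/Pₙ(ω)(z) − 1| → 0 as n → ∞, where D_ξPₙ(ω)(z) = nPₙ(ω)(z) − (z − ξ)Pₙ(ω)′(z) is the polar derivative of Pₙ(ω) with respect to ξ. -/

import Mathlib

/-!
For `‖z‖ ≤ r < 1 = ‖Zⱼ‖` the logarithmic derivative of `Pₙ` turns the quantity into
`(1/n) D_ξPₙ(z)/Pₙ(z) - 1 = -(z - ξ) · (1/n) ∑ⱼ (z - Zⱼ)⁻¹`.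
Expanding `(z - Zⱼ)⁻¹ = -∑ₖ zᵏ Zⱼ⁻ᵏ⁻¹` and truncating after `K` terms bounds this average,
uniformly in `n` and `z`, by the first `K` empirical moments `(1/n) ∑ⱼ Zⱼ⁻ᵏ⁻¹` plus the tail
`r^K/(1 - r)`. By the strong law of large numbers each moment tends almost surely to
`∫ w⁻ᵏ⁻¹ dμ = 0`, and only countably many moments are involved.
-/

open MeasureTheory Filter Polynomial

/-- The polar derivative `D_ξ P(z) = nP(z) - (z - ξ)P'(z)` of a degree-`n`
polynomial `P` with respect to `ξ ∈ ℂ`. -/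
noncomputable def polarDeriv (n : ℕ) (ξ : ℂ) (p : Polynomial ℂ) : Polynomial ℂ :=
  C (n : ℂ) * p - (X - C ξ) * Polynomial.derivative p

/-- The uniform (normalized arc-length / Haar) probability measure on the unit circle
`S¹ ⊆ ℂ`: the pushforward of normalized Lebesgue measure on `(0, 2π]` under
`θ ↦ exp(iθ)`. -/
noncomputable def uniformCircleMeasure : Measure ℂ :=
  Measure.map (fun θ : ℝ => Complex.exp (θ * Complex.I))
    ((ENNReal.ofReal (2 * Real.pi))⁻¹ • volume.restrict (Set.Ioc 0 (2 * Real.pi)))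

open Topology Finset

instance : IsProbabilityMeasure uniformCircleMeasure := by
  have : IsProbabilityMeasure
      ((ENNReal.ofReal (2 * Real.pi))⁻¹ • volume.restrict (Set.Ioc 0 (2 * Real.pi))) := by
    constructor
    rw [Measure.smul_apply, Measure.restrict_apply_univ, Real.volume_Ioc, sub_zero, smul_eq_mul,
      ENNReal.inv_mul_cancel (by simp [Real.pi_pos]) ENNReal.ofReal_ne_top]
  exact Measure.isProbabilityMeasure_map (by fun_prop)

lemma ae_norm_eq_one_uniformCircleMeasure : ∀ᵐ w ∂uniformCircleMeasure, ‖w‖ = 1 :=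
  (ae_map_iff (by fun_prop) (measurableSet_eq_fun measurable_norm measurable_const)).2
    (ae_of_all _ fun θ => Complex.norm_exp_ofReal_mul_I θ)

lemma integral_zpow_uniformCircleMeasure {k : ℤ} (hk : k ≠ 0) :
    ∫ w, w ^ k ∂uniformCircleMeasure = 0 := by
  have hc : (k : ℂ) * Complex.I ≠ 0 := mul_ne_zero (Int.cast_ne_zero.2 hk) Complex.I_ne_zero
  have hexp (θ : ℝ) : Complex.exp (θ * Complex.I) ^ k = Complex.exp (k * Complex.I * θ) := by
    rw [← Complex.exp_int_mul]
    ring_nf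
  rw [uniformCircleMeasure, integral_map (by fun_prop) (by fun_prop), integral_smul_measure]
  simp only [hexp]
  rw [← intervalIntegral.integral_of_le (by positivity), integral_exp_mul_complex hc]
  have hperiod : Complex.exp (k * Complex.I * ↑(2 * Real.pi)) = 1 := by
    rw [← Complex.exp_int_mul_two_pi_mul_I k]
    push_cast
    ring_nf
  rw [hperiod, Complex.ofReal_zero, mul_zero, Complex.exp_zero, sub_self, zero_div, smul_zero]

open ProbabilityTheory in
theorem ae_tendsto_average_comp {Ω α E : Type*} [MeasurableSpace Ω] {μ : Measure Ω}
    [MeasurableSpace α] [NormedAddCommGroup E] [NormedSpace ℝ E] [CompleteSpace E]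
    [MeasurableSpace E] [BorelSpace E] {X : ℕ → Ω → α} (hX : ∀ i, Measurable (X i))
    {ν : Measure α} (hlaw : ∀ i, μ.map (X i) = ν)
    (hindep : Pairwise fun i j => IndepFun (X i) (X j) μ)
    {f : α → E} (hf : Measurable f) (hfν : Integrable f ν) :
    ∀ᵐ ω ∂μ, Tendsto (fun n : ℕ => (n : ℝ)⁻¹ • ∑ i ∈ range n, f (X i ω)) atTop
      (𝓝 (∫ x, f x ∂ν)) := by
  have hident (i : ℕ) : IdentDistrib (X i) (X 0) μ μ :=
    ⟨(hX i).aemeasurable, (hX 0).aemeasurable, by rw [hlaw, hlaw]⟩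
  have hmean : ∫ ω, f (X 0 ω) ∂μ = ∫ x, f x ∂ν := by
    rw [← hlaw 0] at hfν ⊢
    exact (integral_map (hX 0).aemeasurable hfν.aestronglyMeasurable).symm
  rw [← hmean]
  exact strong_law_ae (fun i => f ∘ X i) (((hlaw 0).symm ▸ hfν).comp_measurable (hX 0))
    (fun i j hij => (hindep hij).comp hf hf) (fun i => (hident i).comp hf)

lemma eval_derivative_prod_X_sub_C {K ι : Type*} [Field K] (s : Finset ι) (w : ι → K) {z : K}
    (hz : ∀ j ∈ s, z ≠ w j) :
    eval z (derivative (∏ j ∈ s, (X - C (w j)))) =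
      eval z (∏ j ∈ s, (X - C (w j))) * ∑ j ∈ s, (z - w j)⁻¹ := by
  classical
  rw [derivative_prod_finset, eval_finsetSum, mul_sum]
  refine sum_congr rfl fun j hj => ?_
  simp only [derivative_sub, derivative_X, derivative_C, sub_zero, mul_one, eval_prod, eval_sub,
    eval_X, eval_C]
  rw [← prod_erase_mul s _ hj, mul_inv_cancel_right₀ (sub_ne_zero.2 (hz j hj))]

lemma eval_polarDeriv_prod_X_sub_C_div {ι : Type*} (n : ℕ) (ξ : ℂ) (s : Finset ι) (w : ι → ℂ)
    {z : ℂ} (hz : ∀ j ∈ s, z ≠ w j) :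
    eval z (polarDeriv n ξ (∏ j ∈ s, (X - C (w j)))) / eval z (∏ j ∈ s, (X - C (w j))) =
      n - (z - ξ) * ∑ j ∈ s, (z - w j)⁻¹ := by
  have hP : eval z (∏ j ∈ s, (X - C (w j))) ≠ 0 := by
    rw [eval_prod]
    exact prod_ne_zero_iff.2 fun j hj => by simpa [sub_eq_zero] using hz j hj
  rw [polarDeriv, eval_sub, eval_mul, eval_mul, eval_C, eval_sub, eval_X, eval_C,
    eval_derivative_prod_X_sub_C s w hz]
  field_simp

lemma norm_inv_sub_add_geom_sum_le {z w : ℂ} {r : ℝ} (hz : ‖z‖ ≤ r) (hr : r < 1) (hw : ‖w‖ = 1)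
    (K : ℕ) : ‖(z - w)⁻¹ + ∑ k ∈ range K, z ^ k * w⁻¹ ^ (k + 1)‖ ≤ r ^ K / (1 - r) := by
  have hr0 : 0 ≤ r := (norm_nonneg z).trans hz
  have hw0 : w ≠ 0 := norm_ne_zero_iff.1 (by rw [hw]; exact one_ne_zero)
  have hdist : 1 - r ≤ ‖z - w‖ := by
    have := norm_sub_norm_le w z
    rw [hw, norm_sub_rev] at this
    linarith
  have hzw : z - w ≠ 0 := norm_pos_iff.1 (by linarith)
  have hgeom : (z - w)⁻¹ + ∑ k ∈ range K, z ^ k * w⁻¹ ^ (k + 1) = (z * w⁻¹) ^ K * (z - w)⁻¹ := by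
    have hsum : ∑ k ∈ range K, z ^ k * w⁻¹ ^ (k + 1) = w⁻¹ * ∑ k ∈ range K, (z * w⁻¹) ^ k := by
      rw [mul_sum]
      exact sum_congr rfl fun k _ => by ring
    refine mul_left_cancel₀ hzw ?_
    rw [hsum]
    linear_combination (1 - (z * w⁻¹) ^ K) * mul_inv_cancel₀ hzw
      - (∑ k ∈ range K, (z * w⁻¹) ^ k) * mul_inv_cancel₀ hw0 + geom_sum_mul (z * w⁻¹) K
  rw [hgeom, norm_mul, norm_pow, norm_mul, norm_inv, hw, inv_one, mul_one, norm_inv,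
    div_eq_mul_inv]
  gcongr

lemma norm_average_inv_sub_le {w : ℕ → ℂ} (hw : ∀ j, ‖w j‖ = 1) {z : ℂ} {r : ℝ} (hz : ‖z‖ ≤ r)
    (hr : r < 1) (n K : ℕ) :
    ‖(n : ℝ)⁻¹ • ∑ j ∈ range n, (z - w j)⁻¹‖ ≤
      ∑ k ∈ range K, ‖(n : ℝ)⁻¹ • ∑ j ∈ range n, (w j)⁻¹ ^ (k + 1)‖ + r ^ K / (1 - r) := by
  set E : ℕ → ℂ := fun j => (z - w j)⁻¹ + ∑ k ∈ range K, z ^ k * (w j)⁻¹ ^ (k + 1)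
  have hsplit : (n : ℝ)⁻¹ • ∑ j ∈ range n, (z - w j)⁻¹ = (n : ℝ)⁻¹ • ∑ j ∈ range n, E j
      - ∑ k ∈ range K, z ^ k * ((n : ℝ)⁻¹ • ∑ j ∈ range n, (w j)⁻¹ ^ (k + 1)) := by
    simp only [E, sum_add_distrib, smul_add, mul_smul_comm, ← smul_sum, mul_sum]
    rw [sum_comm]
    ring
  have hE : ‖(n : ℝ)⁻¹ • ∑ j ∈ range n, E j‖ ≤ r ^ K / (1 - r) := by
    rcases n.eq_zero_or_pos with rfl | hn
    · simp only [range_zero, sum_empty, smul_zero, norm_zero]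
      exact div_nonneg (pow_nonneg ((norm_nonneg z).trans hz) K) (by linarith)
    calc ‖(n : ℝ)⁻¹ • ∑ j ∈ range n, E j‖ ≤ (n : ℝ)⁻¹ * (n * (r ^ K / (1 - r))) := by
          rw [norm_smul, norm_inv, RCLike.norm_natCast]
          gcongr
          refine (norm_sum_le_of_le _ fun j _ =>
            norm_inv_sub_add_geom_sum_le hz hr (hw j) K).trans_eq ?_
          rw [sum_const, card_range, nsmul_eq_mul]
      _ = r ^ K / (1 - r) := by field_simp
  have hmom (k : ℕ) : ‖z ^ k * ((n : ℝ)⁻¹ • ∑ j ∈ range n, (w j)⁻¹ ^ (k + 1))‖ ≤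
      ‖(n : ℝ)⁻¹ • ∑ j ∈ range n, (w j)⁻¹ ^ (k + 1)‖ := by
    rw [norm_mul, norm_pow]
    exact mul_le_of_le_one_left (norm_nonneg _) (pow_le_one₀ (norm_nonneg z) (hz.trans hr.le))
  rw [hsplit, add_comm]
  exact (norm_sub_le _ _).trans
    (add_le_add hE ((norm_sum_le _ _).trans (sum_le_sum fun k _ => hmom k)))

theorem tendstoUniformlyOn_average_inv_sub {w : ℕ → ℂ} (hw : ∀ j, ‖w j‖ = 1)
    (hmom : ∀ k : ℕ, Tendsto (fun n : ℕ => (n : ℝ)⁻¹ • ∑ j ∈ range n, (w j)⁻¹ ^ (k + 1)) atTop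
      (𝓝 0))
    {r : ℝ} (hr : r < 1) :
    TendstoUniformlyOn (fun (n : ℕ) (z : ℂ) => (n : ℝ)⁻¹ • ∑ j ∈ range n, (z - w j)⁻¹) 0 atTop
      (Metric.closedBall 0 r) := by
  rw [Metric.tendstoUniformlyOn_iff]
  intro ε hε
  set ρ := max r 0
  have hρ : ρ < 1 := max_lt hr one_pos
  have htail : Tendsto (fun K : ℕ => ρ ^ K / (1 - ρ)) atTop (𝓝 0) := by
    simpa using (tendsto_pow_atTop_nhds_zero_of_lt_one (le_max_right r 0) hρ).div_const (1 - ρ)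
  obtain ⟨K, hK⟩ := (htail.eventually (gt_mem_nhds (half_pos hε))).exists
  have hhead : Tendsto (fun n : ℕ => ∑ k ∈ range K,
      ‖(n : ℝ)⁻¹ • ∑ j ∈ range n, (w j)⁻¹ ^ (k + 1)‖) atTop (𝓝 0) := by
    simpa using tendsto_finsetSum (range K) fun k _ => (hmom k).norm
  filter_upwards [hhead.eventually (gt_mem_nhds (half_pos hε))] with n hn z hz
  rw [Pi.zero_apply, dist_zero_left]
  have hzρ : ‖z‖ ≤ ρ := (mem_closedBall_zero_iff.1 hz).trans (le_max_left r 0)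
  calc _ ≤ _ := norm_average_inv_sub_le hw hzρ hρ n K
    _ < ε / 2 + ε / 2 := add_lt_add hn hK
    _ = ε := add_halves ε

theorem TendstoUniformlyOn.bounded_mul {ι α R : Type*} [SeminormedRing R] {F : ι → α → R}
    {g : α → R} {l : Filter ι} {s : Set α} {C : ℝ} (hF : TendstoUniformlyOn F 0 l s)
    (hg : ∀ x ∈ s, ‖g x‖ ≤ C) : TendstoUniformlyOn (fun n x => g x * F n x) 0 l s := by
  rw [Metric.tendstoUniformlyOn_iff] at hF ⊢
  intro ε hε
  have hD : 0 < max C 0 + 1 := by positivity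
  filter_upwards [hF (ε / (max C 0 + 1)) (div_pos hε hD)] with n hn x hx
  specialize hn x hx
  rw [Pi.zero_apply, dist_zero_left] at hn ⊢
  calc ‖g x * F n x‖ ≤ ‖g x‖ * ‖F n x‖ := norm_mul_le _ _
    _ ≤ (max C 0 + 1) * ‖F n x‖ := by gcongr; linarith [hg x hx, le_max_left C 0]
    _ < (max C 0 + 1) * (ε / (max C 0 + 1)) := by gcongr
    _ = ε := mul_div_cancel₀ ε hD.ne'

theorem TendstoUniformlyOn.tendsto_iSup_norm {ι α E : Type*} [SeminormedAddCommGroup E]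
    {F : ι → α → E} {l : Filter ι} {s : Set α} (hF : TendstoUniformlyOn F 0 l s) :
    Tendsto (fun n => ⨆ x ∈ s, ‖F n x‖) l (𝓝 0) := by
  rw [Metric.tendsto_nhds]
  intro ε hε
  filter_upwards [Metric.tendstoUniformlyOn_iff.1 hF (ε / 2) (half_pos hε)] with n hn
  have hle : ⨆ x ∈ s, ‖F n x‖ ≤ ε / 2 :=
    Real.iSup_le (fun x => Real.iSup_le (fun hx => by simpa using (hn x hx).le) (half_pos hε).le)
      (half_pos hε).le
  have hnonneg : 0 ≤ ⨆ x ∈ s, ‖F n x‖ :=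
    Real.iSup_nonneg fun x => Real.iSup_nonneg fun _ => norm_nonneg _
  rw [Real.dist_eq, sub_zero, abs_of_nonneg hnonneg]
  linarith

open ProbabilityTheory in
lemma ae_tendsto_average_inv_pow_succ {Ω : Type*} [MeasurableSpace Ω] {μ : Measure Ω}
    {Z : ℕ → Ω → ℂ} (hZ : ∀ i, Measurable (Z i))
    (hlaw : ∀ i, μ.map (Z i) = uniformCircleMeasure)
    (hindep : Pairwise fun i j => IndepFun (Z i) (Z j) μ) (k : ℕ) :
    ∀ᵐ ω ∂μ, Tendsto (fun n : ℕ => (n : ℝ)⁻¹ • ∑ j ∈ range n, (Z j ω)⁻¹ ^ (k + 1)) atTop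
      (𝓝 0) := by
  have hint : Integrable (fun w : ℂ => w⁻¹ ^ (k + 1)) uniformCircleMeasure :=
    Integrable.of_bound (by fun_prop) 1 <| by
      filter_upwards [ae_norm_eq_one_uniformCircleMeasure] with w hw
      simp [hw]
  have hmean : ∫ w, w⁻¹ ^ (k + 1) ∂uniformCircleMeasure = 0 := by
    simpa [← zpow_natCast, ← zpow_neg] using
      integral_zpow_uniformCircleMeasure (k := -(k + 1 : ℕ)) (by omega)
  have := ae_tendsto_average_comp hZ hlaw hindep (f := fun w : ℂ => w⁻¹ ^ (k + 1))
    (by fun_prop) hint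
  rwa [hmean] at this

theorem statement13_general
    {Ω : Type*} [MeasurableSpace Ω] (ℙ : Measure Ω)
    (Z : ℕ → Ω → ℂ) (hZmeas : ∀ i, Measurable (Z i))
    (hZlaw : ∀ i, Measure.map (Z i) ℙ = uniformCircleMeasure)
    (hZindep : ProbabilityTheory.iIndepFun Z ℙ)
    (ξ : ℂ) :
    ∀ᵐ ω ∂ℙ, ∀ r : ℝ, 0 < r → r < 1 →
      Tendsto
        (fun n : ℕ => ⨆ z ∈ Metric.closedBall (0 : ℂ) r,
          ‖((n : ℂ)⁻¹ *
                Polynomial.eval z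
                  (polarDeriv n ξ (∏ j ∈ Finset.range n, (X - C (Z j ω)))) /
                Polynomial.eval z (∏ j ∈ Finset.range n, (X - C (Z j ω))) - 1)‖)
        atTop (nhds 0) := by
  have hunit : ∀ᵐ ω ∂ℙ, ∀ j, ‖Z j ω‖ = 1 := ae_all_iff.2 fun j =>
    ae_of_ae_map (hZmeas j).aemeasurable ((hZlaw j).symm ▸ ae_norm_eq_one_uniformCircleMeasure)
  have hmom := ae_all_iff.2 <|
    ae_tendsto_average_inv_pow_succ hZmeas hZlaw fun i j hij => hZindep.indepFun hij
  filter_upwards [hunit, hmom] with ω hunit hmom r _ hr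
  refine TendstoUniformlyOn.tendsto_iSup_norm <|
    ((tendstoUniformlyOn_average_inv_sub hunit hmom hr).bounded_mul (g := fun z => -(z - ξ))
      (C := r + ‖ξ‖) fun z hz => ?_).congr ?_
  · rw [norm_neg]
    exact (norm_sub_le z ξ).trans (by gcongr; exact mem_closedBall_zero_iff.1 hz)
  · filter_upwards [eventually_ne_atTop 0] with n hn z hz
    have hzw : ∀ j ∈ range n, z ≠ Z j ω := fun j _ h => by
      linarith [mem_closedBall_zero_iff.1 hz, h ▸ hunit j]
    dsimp only
    rw [mul_div_assoc, eval_polarDeriv_prod_X_sub_C_div n ξ (range n) _ hzw, Complex.real_smul]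
    push_cast
    field_simp
    ring

/-- Let `Z₁, Z₂, …` be i.i.d. with the uniform (Haar) law on the unit
circle, and `ξ ∈ ℂ`.  Then almost surely, for every `0 < r < 1`,
`sup_{|z| ≤ r} |(1/n) D_ξPₙ(ω)(z)/Pₙ(ω)(z) - 1| → 0` as `n → ∞`. -/
theorem statement13
    {Ω : Type*} [MeasurableSpace Ω] (ℙ : Measure Ω) [IsProbabilityMeasure ℙ]
    (Z : ℕ → Ω → ℂ) (hZmeas : ∀ i, Measurable (Z i))
    (hZlaw : ∀ i, Measure.map (Z i) ℙ = uniformCircleMeasure)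
    (hZindep : ProbabilityTheory.iIndepFun Z ℙ)
    (ξ : ℂ) :
    ∀ᵐ ω ∂ℙ, ∀ r : ℝ, 0 < r → r < 1 →
      Tendsto
        (fun n : ℕ => ⨆ z ∈ Metric.closedBall (0 : ℂ) r,
          ‖((n : ℂ)⁻¹ *
                Polynomial.eval z
                  (polarDeriv n ξ (∏ j ∈ Finset.range n, (X - C (Z j ω)))) /
                Polynomial.eval z (∏ j ∈ Finset.range n, (X - C (Z j ω))) - 1)‖)
        atTop (nhds 0) :=
  statement13_general ℙ Z hZmeas hZlaw hZindep ξ
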